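/- Let Δ⁺ ⊂ ℝ² be the triangle with vertices (0,0), (3,3), (3,-3) and μ(x,y) = ((x-y)(x+y))² = (x²-y²)². Then the barycenter b = (∫_{Δ⁺} p μ dp)/(∫_{Δ⁺} μ dp) satisfies b - (2,0) ∈ relative interior of the cone generated by (1,1) and (1,-1); that is, writing b = (b₁, b₂), one has b₁ - 2 > |b₂| (and by symmetry b₂ = 0, so the condition is b₁ > 2). -/

import Mathlib

/-!
Slice the triangle by the vertical lines `x = const`: the slice at `x ∈ [0, 3]` is `[-x, x]`, on
which `∫ (x² - y²)² dy = 16 x⁵ / 15`, while `y (x² - y²)²` is odd in `y` and integrates to `0`.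
Hence `b = (∫₀³ x⁶ dx / ∫₀³ x⁵ dx, 0) = (18/7, 0)`, and `18/7 > 2`.
-/

open MeasureTheory

/-- The triangle with vertices (0,0), (3,3), (3,-3) in ℝ². -/
noncomputable def delta17 : Set (ℝ × ℝ) :=
  convexHull ℝ {((0:ℝ), (0:ℝ)), ((3:ℝ), (3:ℝ)), ((3:ℝ), (-3:ℝ))}

/-- The Duistermaat–Heckman density `((x-y)(x+y))² = (x² - y²)²`. -/
noncomputable def mu17 (p : ℝ × ℝ) : ℝ := (p.1 ^ 2 - p.2 ^ 2) ^ 2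

/-- The barycenter of `delta17` with respect to `(x² - y²)² dp`. -/
noncomputable def bar17 : ℝ × ℝ :=
  ((∫ p in delta17, p.1 * mu17 p) / (∫ p in delta17, mu17 p),
   (∫ p in delta17, p.2 * mu17 p) / (∫ p in delta17, mu17 p))

open Set

theorem convexHull_triangle {a : ℝ} (ha : 0 < a) :
    convexHull ℝ {((0:ℝ), (0:ℝ)), (a, a), (a, -a)} = {p : ℝ × ℝ | p.1 ≤ a ∧ |p.2| ≤ p.1} := by
  apply Subset.antisymm
  · refine convexHull_min ?_ ?_
    · rintro p (rfl | rfl | rfl | _) <;> simp_all [abs_of_pos ha, ha.le]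
    · rintro ⟨x₁, y₁⟩ ⟨hx₁, hy₁⟩ ⟨x₂, y₂⟩ ⟨hx₂, hy₂⟩ s t hs ht hst
      rw [abs_le] at hy₁ hy₂
      simp only [Prod.smul_mk, Prod.mk_add_mk, smul_eq_mul, mem_ofPred_eq, abs_le]
      refine ⟨?_, ?_, ?_⟩ <;> nlinarith
  · rintro ⟨x, y⟩ ⟨hxa, hyx⟩
    dsimp only at hxa hyx
    obtain ⟨hyx₁, hyx₂⟩ := abs_le.1 hyx
    have hcombo : (x, y) = ∑ i, ![1 - x / a, (x + y) / (2 * a), (x - y) / (2 * a)] i •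
        ![((0:ℝ), (0:ℝ)), (a, a), (a, -a)] i := by
      simp only [Fin.sum_univ_three, Matrix.cons_val_zero, Matrix.cons_val_one, Matrix.cons_val,
        Prod.smul_mk, smul_eq_mul, Prod.mk_add_mk, Prod.mk.injEq]
      constructor <;> field_simp <;> ring
    rw [hcombo]
    refine (convex_convexHull ℝ _).sum_mem (fun i _ => ?_) ?_ (fun i _ => ?_)
    · fin_cases i <;> simp only [Fin.zero_eta, Fin.mk_one, Fin.reduceFinMk, Matrix.cons_val]
      · exact sub_nonneg.2 ((div_le_one ha).2 hxa)
      all_goals exact div_nonneg (by linarith) (by positivity)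
    · simp only [Fin.sum_univ_three, Matrix.cons_val_zero, Matrix.cons_val_one, Matrix.cons_val]
      field_simp
      ring
    · fin_cases i <;> apply subset_convexHull <;> simp

theorem setIntegral_triangle {a : ℝ} {f : ℝ × ℝ → ℝ} (hf : Continuous f) :
    ∫ p in {p : ℝ × ℝ | p.1 ≤ a ∧ |p.2| ≤ p.1}, f p = ∫ x in Icc 0 a, ∫ y in -x..x, f (x, y) := by
  set T := {p : ℝ × ℝ | p.1 ≤ a ∧ |p.2| ≤ p.1}
  have hT_closed : IsClosed T :=
    (isClosed_le continuous_fst continuous_const).inter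
      (isClosed_le continuous_snd.abs continuous_fst)
  have hT_sub : T ⊆ Icc 0 a ×ˢ Icc (-a) a := fun _ ⟨hxa, hyx⟩ =>
    ⟨⟨(abs_nonneg _).trans hyx, hxa⟩, abs_le.1 (hyx.trans hxa)⟩
  have hint : Integrable (T.indicator f) (volume.prod volume) := by
    rw [← Measure.volume_eq_prod, integrable_indicator_iff hT_closed.measurableSet]
    exact hf.continuousOn.integrableOn_compact
      ((isCompact_Icc.prod isCompact_Icc).of_isClosed_subset hT_closed hT_sub)
  have hslice (x : ℝ) : ∫ y, T.indicator f (x, y) =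
      (Icc 0 a).indicator (fun x => ∫ y in -x..x, f (x, y)) x := by
    by_cases hx : x ∈ Icc 0 a
    · have h (y : ℝ) : T.indicator f (x, y) = (Icc (-x) x).indicator (fun y => f (x, y)) y := by
        simp only [T, indicator, mem_ofPred_eq, mem_Icc, ← abs_le, hx.2, true_and]
      simp only [h, integral_indicator measurableSet_Icc, indicator_of_mem hx,
        intervalIntegral.integral_of_le (neg_le_self hx.1), integral_Icc_eq_integral_Ioc]
    · have h (y : ℝ) : T.indicator f (x, y) = 0 :=
        indicator_of_notMem (fun hxy => hx (hT_sub hxy).1) _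
      simp only [h, integral_zero, indicator_of_notMem hx]
  rw [← integral_indicator hT_closed.measurableSet, Measure.volume_eq_prod, integral_prod _ hint]
  simp only [hslice, integral_indicator measurableSet_Icc]

theorem intervalIntegral_neg_self_eq_zero_of_odd {f : ℝ → ℝ} (hf : ∀ y, f (-y) = -f y) (x : ℝ) :
    ∫ y in -x..x, f y = 0 := by
  have h := intervalIntegral.integral_comp_neg (a := -x) (b := x) f
  simp only [hf, intervalIntegral.integral_neg, neg_neg] at h
  linarith

theorem integral_sq_sub_sq_sq (x : ℝ) : ∫ y in -x..x, (x ^ 2 - y ^ 2) ^ 2 = 16 / 15 * x ^ 5 := by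
  have hderiv (y : ℝ) :
      HasDerivAt (fun y => x ^ 4 * y - 2 / 3 * x ^ 2 * y ^ 3 + y ^ 5 / 5) ((x ^ 2 - y ^ 2) ^ 2) y := by
    refine ((((hasDerivAt_id y).const_mul (x ^ 4)).sub
      ((hasDerivAt_pow 3 y).const_mul (2 / 3 * x ^ 2))).add
        ((hasDerivAt_pow 5 y).div_const 5)).congr_deriv ?_
    push_cast
    ring
  rw [intervalIntegral.integral_eq_sub_of_hasDerivAt (fun y _ => hderiv y)
    ((by fun_prop : Continuous fun y : ℝ => (x ^ 2 - y ^ 2) ^ 2).intervalIntegrable _ _)]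
  ring

theorem setIntegral_delta17 {f : ℝ × ℝ → ℝ} (hf : Continuous f) :
    ∫ p in delta17, f p = ∫ x in (0 : ℝ)..3, ∫ y in -x..x, f (x, y) := by
  rw [delta17, convexHull_triangle three_pos, setIntegral_triangle hf,
    intervalIntegral.integral_of_le zero_le_three, integral_Icc_eq_integral_Ioc]

theorem continuous_mu17 : Continuous mu17 := by
  unfold mu17
  fun_prop

theorem integral_mu17 : ∫ p in delta17, mu17 p = 648 / 5 := by
  rw [setIntegral_delta17 continuous_mu17]
  simp only [mu17, integral_sq_sub_sq_sq, intervalIntegral.integral_const_mul, integral_pow]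
  norm_num

theorem integral_fst_mul_mu17 : ∫ p in delta17, p.1 * mu17 p = 11664 / 35 := by
  have h (x : ℝ) : x * (16 / 15 * x ^ 5) = 16 / 15 * x ^ 6 := by ring
  rw [setIntegral_delta17 (f := fun p => p.1 * mu17 p) (continuous_fst.mul continuous_mu17)]
  simp only [mu17, intervalIntegral.integral_const_mul, integral_sq_sub_sq_sq, h, integral_pow]
  norm_num

theorem integral_snd_mul_mu17 : ∫ p in delta17, p.2 * mu17 p = 0 := by
  rw [setIntegral_delta17 (f := fun p => p.2 * mu17 p) (continuous_snd.mul continuous_mu17)]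
  have hodd (x : ℝ) : ∫ y in -x..x, y * (x ^ 2 - y ^ 2) ^ 2 = 0 :=
    intervalIntegral_neg_self_eq_zero_of_odd (fun y => by ring) x
  simp only [mu17, hodd, intervalIntegral.integral_zero]

/-- K-stability of the first smooth Fano compactification of SO₄(ℂ): writing
`b = (b₁, b₂)` for the barycenter, one has `b₂ = 0` and `b₁ - 2 > |b₂|`, i.e.
`b - (2,0)` lies in the relative interior of the cone generated by (1,1), (1,-1). -/
theorem stmt17 : bar17.2 = 0 ∧ |bar17.2| < bar17.1 - 2 := by
  have hb₂ : bar17.2 = 0 := by rw [bar17, integral_snd_mul_mu17, zero_div]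
  have hb₁ : bar17.1 = 18 / 7 := by rw [bar17, integral_fst_mul_mu17, integral_mu17]; norm_num
  refine ⟨hb₂, ?_⟩
  rw [hb₂, hb₁]
  norm_num
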